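/- arXiv:1611.02002 — 5 statements merged into one kernel-verified Lean document; each statement's English description precedes it below -/
import Mathlib

section
/- Let P be a finite partial order. Then the relation ⊑ is a partial order on the set MA(P) of maximal antichains of P, and every two maximal antichains A, B have a greatest lower bound and a least upper bound in (MA(P), ⊑); that is, (MA(P), ⊑) is a lattice. -/
/-- A maximal antichain of a partial order: an antichain (w.r.t. `≤`) not properly
contained in any other antichain. -/
def MaxAntichain {α : Type*} [PartialOrder α] (A : Set α) : Prop :=
  IsAntichain (· ≤ ·) A ∧ ∀ B : Set α, IsAntichain (· ≤ ·) B → A ⊆ B → A = B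

/-- The order `A ⊑ B` on maximal antichains: every element of `A` is below
some element of `B`. -/
def MARel {α : Type*} [PartialOrder α] (A B : Set α) : Prop :=
  ∀ a ∈ A, ∃ b ∈ B, a ≤ b

/-!
The meet of maximal antichains `A` and `B` is the set of maximal elements of `↓A ∩ ↓B`.
It is a maximal antichain: an element `x` outside `↓A ∩ ↓B`, say outside `↓A`, lies above
some `a ∈ A`, and either `a` itself or an element of `B` below `a` is maximal in `↓A ∩ ↓B`.
Joins are meets in the dual order, since for maximal antichains `A ⊑ B` holds iff every
element of `B` lies above some element of `A`.
-/

section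

open OrderDual

variable {α : Type*} [PartialOrder α] {A B C : Set α} {x : α}

theorem maxAntichain_iff :
    MaxAntichain A ↔ IsAntichain (· ≤ ·) A ∧ ∀ x, ∃ a ∈ A, a ≤ x ∨ x ≤ a := by
  refine ⟨fun hA => ⟨hA.1, fun x => ?_⟩, fun ⟨hA, hcomp⟩ => ⟨hA, fun B hB hAB => ?_⟩⟩
  · by_contra! hx
    have hxA : x ∉ A := fun h => (hx x h).1 le_rfl
    have hins : IsAntichain (· ≤ ·) (insert x A) :=
      hA.1.insert (fun a ha _ hax => (hx a ha).1 hax) (fun a ha _ hxa => (hx a ha).2 hxa)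
    exact hxA (hA.2 _ hins (Set.subset_insert x A) ▸ Set.mem_insert x A)
  · refine hAB.antisymm fun x hx => ?_
    obtain ⟨a, ha, hax | hxa⟩ := hcomp x
    · exact hB.eq (hAB ha) hx hax ▸ ha
    · exact (hB.eq hx (hAB ha) hxa).symm ▸ ha

namespace MaxAntichain

theorem exists_le_or_le (hA : MaxAntichain A) (x : α) : ∃ a ∈ A, a ≤ x ∨ x ≤ a :=
  (maxAntichain_iff.1 hA).2 x

theorem exists_le_of_notMem_lowerClosure (hA : MaxAntichain A) (hx : x ∉ lowerClosure A) :
    ∃ a ∈ A, a ≤ x := by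
  obtain ⟨a, ha, hax | hxa⟩ := hA.exists_le_or_le x
  · exact ⟨a, ha, hax⟩
  · exact absurd ⟨a, ha, hxa⟩ hx

theorem preimage_ofDual (hA : MaxAntichain A) : MaxAntichain (ofDual ⁻¹' A) :=
  maxAntichain_iff.2 ⟨hA.1.to_dual, fun x =>
    (hA.exists_le_or_le (ofDual x)).imp fun _ => And.imp_right Or.symm⟩

theorem of_preimage_ofDual (hA : MaxAntichain (ofDual ⁻¹' A)) : MaxAntichain A :=
  maxAntichain_iff.2 ⟨IsAntichain.to_dual_iff.2 hA.1, fun x =>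
    (hA.exists_le_or_le (toDual x)).imp fun _ => And.imp_right Or.symm⟩

end MaxAntichain

theorem marel_refl (A : Set α) : MARel A A := fun a ha => ⟨a, ha, le_rfl⟩

theorem MARel.trans (hAB : MARel A B) (hBC : MARel B C) : MARel A C := fun a ha =>
  let ⟨b, hb, hab⟩ := hAB a ha
  let ⟨c, hc, hbc⟩ := hBC b hb
  ⟨c, hc, hab.trans hbc⟩

theorem MARel.subset_of_marel (hA : IsAntichain (· ≤ ·) A) (hAB : MARel A B)
    (hBA : MARel B A) : A ⊆ B := fun a ha => by
  obtain ⟨b, hb, hab⟩ := hAB a ha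
  obtain ⟨a', ha', hba'⟩ := hBA b hb
  have hab' : a = a' := hA.eq ha ha' (hab.trans hba')
  exact le_antisymm hab (hab' ▸ hba') ▸ hb

theorem MARel.antisymm (hA : IsAntichain (· ≤ ·) A) (hB : IsAntichain (· ≤ ·) B)
    (hAB : MARel A B) (hBA : MARel B A) : A = B :=
  (hAB.subset_of_marel hA hBA).antisymm (hBA.subset_of_marel hB hAB)

theorem MARel.exists_le_of_mem (hAB : MARel A B) (hA : MaxAntichain A)
    (hB : IsAntichain (· ≤ ·) B) : ∀ b ∈ B, ∃ a ∈ A, a ≤ b := fun b hb => by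
  obtain ⟨a, ha, hab | hba⟩ := hA.exists_le_or_le b
  · exact ⟨a, ha, hab⟩
  · obtain ⟨b', hb', hab'⟩ := hAB a ha
    exact ⟨a, ha, (hB.eq hb hb' (hba.trans hab')).symm ▸ hab'⟩

theorem marel_of_forall_exists_le (hA : IsAntichain (· ≤ ·) A) (hB : MaxAntichain B)
    (h : ∀ b ∈ B, ∃ a ∈ A, a ≤ b) : MARel A B := fun a ha => by
  obtain ⟨b, hb, hba | hab⟩ := hB.exists_le_or_le a
  · obtain ⟨a', ha', ha'b⟩ := h b hb
    exact ⟨b, hb, hA.eq ha' ha (ha'b.trans hba) ▸ ha'b⟩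
  · exact ⟨b, hb, hab⟩

theorem marel_preimage_ofDual_iff (hA : MaxAntichain A) (hB : MaxAntichain B) :
    MARel (ofDual ⁻¹' A) (ofDual ⁻¹' B) ↔ MARel B A :=
  ⟨fun h => marel_of_forall_exists_le hB.1 hA fun a ha => h a ha,
    fun h a ha => h.exists_le_of_mem hB hA.1 a ha⟩

def maMeet (A B : Set α) : Set α :=
  {m | Maximal (· ∈ lowerClosure A ⊓ lowerClosure B) m}

theorem maMeet_comm (A B : Set α) : maMeet A B = maMeet B A := by
  rw [maMeet, maMeet, inf_comm]

theorem marel_maMeet_left : MARel (maMeet A B) A := fun _ hm => hm.prop.1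

theorem marel_maMeet_right : MARel (maMeet A B) B := fun _ hm => hm.prop.2

theorem IsAntichain.maximal_of_le_lowerClosure {L : LowerSet α} (hA : IsAntichain (· ≤ ·) A)
    (hL : L ≤ lowerClosure A) {a : α} (ha : a ∈ A) (haL : a ∈ L) : Maximal (· ∈ L) a := by
  refine ⟨haL, fun d hd had => ?_⟩
  obtain ⟨a', ha', hda'⟩ := hL hd
  exact hA.eq ha ha' (had.trans hda') ▸ hda'

theorem exists_mem_maMeet_le_of_notMem_lowerClosure (hA : MaxAntichain A) (hB : MaxAntichain B)
    (hx : x ∉ lowerClosure A) : ∃ m ∈ maMeet A B, m ≤ x := by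
  obtain ⟨a, ha, hax⟩ := hA.exists_le_of_notMem_lowerClosure hx
  by_cases haB : a ∈ lowerClosure B
  · exact ⟨a, hA.1.maximal_of_le_lowerClosure inf_le_left ha ⟨subset_lowerClosure ha, haB⟩, hax⟩
  · obtain ⟨b, hb, hba⟩ := hB.exists_le_of_notMem_lowerClosure haB
    exact ⟨b, hB.1.maximal_of_le_lowerClosure inf_le_right hb
      ⟨⟨a, ha, hba⟩, subset_lowerClosure hb⟩, hba.trans hax⟩

section WellFoundedGT

variable [WellFoundedGT α]

theorem marel_maMeet (hCA : MARel C A) (hCB : MARel C B) : MARel C (maMeet A B) := fun c hc =>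
  let ⟨m, hcm, hm⟩ := exists_maximal_ge_of_wellFoundedGT _ c ⟨hCA c hc, hCB c hc⟩
  ⟨m, hm, hcm⟩

theorem maxAntichain_maMeet (hA : MaxAntichain A) (hB : MaxAntichain B) :
    MaxAntichain (maMeet A B) := by
  refine maxAntichain_iff.2 ⟨setOfPred_maximal_antichain _, fun x => ?_⟩
  by_cases hx : x ∈ lowerClosure A ⊓ lowerClosure B
  · obtain ⟨m, hxm, hm⟩ := exists_maximal_ge_of_wellFoundedGT _ x hx
    exact ⟨m, hm, Or.inr hxm⟩
  rw [LowerSet.mem_inf_iff, not_and_or] at hx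
  obtain ⟨m, hm, hmx⟩ : ∃ m ∈ maMeet A B, m ≤ x := by
    rcases hx with hxA | hxB
    · exact exists_mem_maMeet_le_of_notMem_lowerClosure hA hB hxA
    · exact maMeet_comm B A ▸ exists_mem_maMeet_le_of_notMem_lowerClosure hB hA hxB
  exact ⟨m, hm, Or.inl hmx⟩

theorem MaxAntichain.exists_meet (hA : MaxAntichain A) (hB : MaxAntichain B) :
    ∃ M : Set α, MaxAntichain M ∧ MARel M A ∧ MARel M B ∧
      ∀ C : Set α, MaxAntichain C → MARel C A → MARel C B → MARel C M :=
  ⟨maMeet A B, maxAntichain_maMeet hA hB, marel_maMeet_left, marel_maMeet_right,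
    fun _ _ => marel_maMeet⟩

end WellFoundedGT

theorem MaxAntichain.exists_join [WellFoundedLT α] (hA : MaxAntichain A) (hB : MaxAntichain B) :
    ∃ J : Set α, MaxAntichain J ∧ MARel A J ∧ MARel B J ∧
      ∀ C : Set α, MaxAntichain C → MARel A C → MARel B C → MARel J C := by
  obtain ⟨M, hM, hMA, hMB, hM_ge⟩ := hA.preimage_ofDual.exists_meet hB.preimage_ofDual
  have hJ : MaxAntichain (toDual ⁻¹' M) := hM.of_preimage_ofDual
  refine ⟨toDual ⁻¹' M, hJ, (marel_preimage_ofDual_iff hJ hA).1 hMA,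
    (marel_preimage_ofDual_iff hJ hB).1 hMB, fun C hC hAC hBC => ?_⟩
  exact (marel_preimage_ofDual_iff hC hJ).1 <| hM_ge _ hC.preimage_ofDual
    ((marel_preimage_ofDual_iff hC hA).2 hAC) ((marel_preimage_ofDual_iff hC hB).2 hBC)

end

/-- `⊑` is a partial order on the set of maximal antichains, and any two maximal
antichains have a greatest lower bound and a least upper bound: `(MA(P), ⊑)` is a
lattice. -/
theorem stmt6 {α : Type*} [Fintype α] [PartialOrder α] :
    (∀ A : Set α, MaxAntichain A → MARel A A) ∧
    (∀ A B : Set α, MaxAntichain A → MaxAntichain B → MARel A B → MARel B A → A = B) ∧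
    (∀ A B C : Set α, MaxAntichain A → MaxAntichain B → MaxAntichain C →
      MARel A B → MARel B C → MARel A C) ∧
    (∀ A B : Set α, MaxAntichain A → MaxAntichain B →
      (∃ M : Set α, MaxAntichain M ∧ MARel M A ∧ MARel M B ∧
        ∀ C : Set α, MaxAntichain C → MARel C A → MARel C B → MARel C M) ∧
      (∃ J : Set α, MaxAntichain J ∧ MARel A J ∧ MARel B J ∧
        ∀ C : Set α, MaxAntichain C → MARel A C → MARel B C → MARel J C)) :=
  ⟨fun A _ => marel_refl A, fun _ _ hA hB => MARel.antisymm hA.1 hB.1,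
    fun _ _ _ _ _ _ => MARel.trans, fun _ _ hA hB => ⟨hA.exists_meet hB, hA.exists_join hB⟩⟩
end

section
/- Let P be a finite partial order and let A, B be maximal antichains of P. If M is a greatest lower bound of {A, B} and J is a least upper bound of {A, B} in (MA(P), ⊑), then A ∪ B ⊆ M ∪ J. -/
/-!
Any two elements of `A ∪ B` that are strictly comparable lie in different antichains, so `A ∪ B`
has height at most two: each of its elements is maximal or minimal in it. Extending the maximal
elements of `A ∪ B` to a maximal antichain `C` gives an upper bound of `A` and `B`, so `J ⊑ C`;
an element `x ∈ A` maximal in `A ∪ B` then satisfies `x ≤ j ≤ c` with `x, c ∈ C`, which forces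
`x = j ∈ J`. Dually, the minimal elements of `A ∪ B` extend to a lower bound `C ⊑ M`, and a
minimal `x ∈ A` satisfies `x ≤ m ≤ a` with `x, a ∈ A`, so `x = m ∈ M`.
-/

section

variable {α : Type*} [PartialOrder α]

theorem IsAntichain.exists_maxAntichain_superset [Finite α] {S : Set α}
    (hS : IsAntichain (· ≤ ·) S) : ∃ C, MaxAntichain C ∧ S ⊆ C := by
  obtain ⟨C, hSC, hC⟩ :=
    Finite.exists_le_maximal (p := fun T : Set α => IsAntichain (· ≤ ·) T ∧ S ⊆ T) ⟨hS, le_rfl⟩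
  exact ⟨C, ⟨hC.1.1, fun D hD hCD => hCD.antisymm (hC.2 ⟨hD, hSC.trans hCD⟩ hCD)⟩, hC.1.2⟩

theorem MaxAntichain.exists_le_or_le_s7 {A : Set α} (hA : MaxAntichain A) (x : α) :
    ∃ a ∈ A, x ≤ a ∨ a ≤ x := by
  by_contra! hx
  have hxA : x ∉ A := fun h => (hx x h).1 le_rfl
  have hins : IsAntichain (· ≤ ·) (insert x A) :=
    hA.1.insert (fun b hb _ => (hx b hb).2) (fun b hb _ => (hx b hb).1)
  exact hxA ((hA.2 _ hins (Set.subset_insert x A)) ▸ Set.mem_insert x A)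

theorem IsAntichain.mem_of_le_of_maRel {D M : Set α} {x m : α} (hD : IsAntichain (· ≤ ·) D)
    (hxD : x ∈ D) (hm : m ∈ M) (hxm : x ≤ m) (hMD : MARel M D) : x ∈ M := by
  obtain ⟨d, hd, hmd⟩ := hMD m hm
  rwa [hxm.antisymm (hmd.trans_eq (hD.eq hxD hd (hxm.trans hmd)).symm)]

theorem maximal_or_minimal_mem_union {A B : Set α} (hA : IsAntichain (· ≤ ·) A)
    (hB : IsAntichain (· ≤ ·) B) {x : α} (hx : x ∈ A ∪ B) :
    Maximal (· ∈ A ∪ B) x ∨ Minimal (· ∈ A ∪ B) x := by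
  by_contra! h
  obtain ⟨y, hxy, hy⟩ := exists_gt_of_not_maximal hx h.1
  obtain ⟨z, hzx, hz⟩ := exists_lt_of_not_minimal hx h.2
  have hzy := hzx.trans hxy
  rcases hx with hx | hx <;> rcases hy with hy | hy <;> rcases hz with hz | hz <;>
    first
    | exact hA.not_lt hx hy hxy | exact hB.not_lt hx hy hxy
    | exact hA.not_lt hz hx hzx | exact hB.not_lt hz hx hzx
    | exact hA.not_lt hz hy hzy | exact hB.not_lt hz hy hzy

theorem maRel_of_maximal_subset [Finite α] {S C D : Set α} (hDS : D ⊆ S)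
    (hSC : {x | Maximal (· ∈ S) x} ⊆ C) : MARel D C := fun _ hd =>
  let ⟨c, hdc, hc⟩ := Finite.exists_le_maximal (hDS hd)
  ⟨c, hSC hc, hdc⟩

theorem maRel_of_minimal_subset [Finite α] {S C D : Set α} (hC : IsAntichain (· ≤ ·) C)
    (hSC : {x | Minimal (· ∈ S) x} ⊆ C) (hD : MaxAntichain D) (hDS : D ⊆ S) : MARel C D := by
  intro c hc
  obtain ⟨d, hd, hcd | hdc⟩ := hD.exists_le_or_le_s7 c
  · exact ⟨d, hd, hcd⟩
  · obtain ⟨w, hwd, hw⟩ := Finite.exists_le_minimal (hDS hd)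
    obtain rfl : w = c := hC.eq (hSC hw) hc (hwd.trans hdc)
    exact ⟨d, hd, hwd⟩

theorem mem_lub_of_maximal_mem_union [Finite α] {A B J : Set α} {x : α} (hxA : x ∈ A)
    (hAJ : MARel A J) (hJlub : ∀ C : Set α, MaxAntichain C → MARel A C → MARel B C → MARel J C)
    (hx : Maximal (· ∈ A ∪ B) x) : x ∈ J := by
  obtain ⟨C, hC, hSC⟩ := (setOfPred_maximal_antichain (· ∈ A ∪ B)).exists_maxAntichain_superset
  have hJC : MARel J C := hJlub C hC (maRel_of_maximal_subset Set.subset_union_left hSC)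
    (maRel_of_maximal_subset Set.subset_union_right hSC)
  obtain ⟨j, hj, hxj⟩ := hAJ x hxA
  exact hC.1.mem_of_le_of_maRel (hSC hx) hj hxj hJC

theorem mem_glb_of_minimal_mem_union [Finite α] {A B M : Set α} {x : α} (hA : MaxAntichain A)
    (hB : MaxAntichain B) (hxA : x ∈ A) (hMA : MARel M A)
    (hMglb : ∀ C : Set α, MaxAntichain C → MARel C A → MARel C B → MARel C M)
    (hx : Minimal (· ∈ A ∪ B) x) : x ∈ M := by
  obtain ⟨C, hC, hSC⟩ := (setOfPred_minimal_antichain (· ∈ A ∪ B)).exists_maxAntichain_superset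
  have hCM : MARel C M := hMglb C hC (maRel_of_minimal_subset hC.1 hSC hA Set.subset_union_left)
    (maRel_of_minimal_subset hC.1 hSC hB Set.subset_union_right)
  obtain ⟨m, hm, hxm⟩ := hCM x (hSC hx)
  exact hA.1.mem_of_le_of_maRel hxA hm hxm hMA

theorem subset_glb_union_lub [Finite α] {A B M J : Set α} (hA : MaxAntichain A)
    (hB : MaxAntichain B) (hMA : MARel M A)
    (hMglb : ∀ C : Set α, MaxAntichain C → MARel C A → MARel C B → MARel C M)
    (hAJ : MARel A J) (hJlub : ∀ C : Set α, MaxAntichain C → MARel A C → MARel B C → MARel J C) :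
    A ⊆ M ∪ J := by
  intro x hxA
  rcases maximal_or_minimal_mem_union hA.1 hB.1 (Or.inl hxA) with hmax | hmin
  · exact Or.inr (mem_lub_of_maximal_mem_union hxA hAJ hJlub hmax)
  · exact Or.inl (mem_glb_of_minimal_mem_union hA hB hxA hMA hMglb hmin)

end

theorem stmt7_general {α : Type*} [Fintype α] [PartialOrder α] (A B M J : Set α)
    (hA : MaxAntichain A) (hB : MaxAntichain B)
    (hMA : MARel M A) (hMB : MARel M B)
    (hMglb : ∀ C : Set α, MaxAntichain C → MARel C A → MARel C B → MARel C M)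
    (hAJ : MARel A J) (hBJ : MARel B J)
    (hJlub : ∀ C : Set α, MaxAntichain C → MARel A C → MARel B C → MARel J C) :
    A ∪ B ⊆ M ∪ J :=
  Set.union_subset (subset_glb_union_lub hA hB hMA hMglb hAJ hJlub)
    (subset_glb_union_lub hB hA hMB (fun C hC hCB hCA => hMglb C hC hCA hCB) hBJ
      (fun C hC hBC hAC => hJlub C hC hAC hBC))

theorem stmt7 {α : Type*} [Fintype α] [PartialOrder α] (A B M J : Set α)
    (hA : MaxAntichain A) (hB : MaxAntichain B)
    (hM : MaxAntichain M) (hJ : MaxAntichain J)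
    (hMA : MARel M A) (hMB : MARel M B)
    (hMglb : ∀ C : Set α, MaxAntichain C → MARel C A → MARel C B → MARel C M)
    (hAJ : MARel A J) (hBJ : MARel B J)
    (hJlub : ∀ C : Set α, MaxAntichain C → MARel A C → MARel B C → MARel J C) :
    A ∪ B ⊆ M ∪ J :=
  stmt7_general A B M J hA hB hMA hMB hMglb hAJ hBJ hJlub
end

section
/- Let G be a finite simple graph and let ⊑ be a partial order on the set C(G) of maximal cliques of G such that every two maximal cliques have a least upper bound and a greatest lower bound under ⊑, and conditions (i) and (ii) hold: (i) for all maximal cliques A ⊑ B ⊑ C, A ∩ C ⊆ B; (ii) for all maximal cliques A, B, A ∪ B ⊆ (A ∨ B) ∪ (A ∧ B). Define a binary relation R on V(G) by: x R y if and only if x and y are not adjacent in G (including x = y) and there exist maximal cliques C', C'' of G with C' ⊑ C'', x ∈ C' and y ∈ C''. Then R is a partial order on V(G), and for all distinct x, y ∈ V(G), x and y are comparable under R if and only if x and y are not adjacent in G (so R is a transitive orientation of the complement of G). -/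
/-- A maximal clique of `G`: a clique not properly contained in any other clique. -/
def MaxCliq {V : Type*} (G : SimpleGraph V) (A : Set V) : Prop :=
  G.IsClique A ∧ ∀ B : Set V, G.IsClique B → A ⊆ B → A = B

/-!
Write `x ≤ y` when some maximal clique containing `x` lies below some maximal clique containing
`y`. For distinct non-adjacent `x ∈ A` and `y ∈ B`, condition (ii) puts one of them in `A ∧ B`
and the other in `A ∨ B`, as no clique holds both; since `A ∧ B ⊑ A ∨ B`, `x` and `y` are
comparable. Condition (i) makes the choice rigid: if `x ≤ y`, then `x ∈ A ∧ B` and `y ∈ A ∨ B`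
for all such `A`, `B`, because `y ∈ A ∧ B` would force `y` into a clique together with `x`.
Applying this to `A ∋ x`, `C ∋ y` and then to `A ∨ C ∋ y`, `D ∋ z` gives
`x ∈ A ∧ C ⊑ (A ∨ C) ∨ D ∋ z`, hence transitivity.
-/

section

variable {V : Type*}

theorem exists_maxCliq_superset (G : SimpleGraph V) {S : Set V} (hS : G.IsClique S) :
    ∃ A, MaxCliq G A ∧ S ⊆ A := by
  obtain ⟨A, hSA, hA⟩ := zorn_subset_nonempty {B | G.IsClique B}
    (fun c hc hchain _ => ⟨⋃₀ c, (Set.pairwise_sUnion hchain.directedOn).2 hc,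
      fun _ => Set.subset_sUnion_of_mem⟩) S hS
  exact ⟨A, ⟨hA.prop, fun B hB hAB => hAB.antisymm (hA.2 hB hAB)⟩, hSA⟩

theorem exists_maxCliq_mem (G : SimpleGraph V) (x : V) : ∃ A, MaxCliq G A ∧ x ∈ A := by
  obtain ⟨A, hA, hxA⟩ := exists_maxCliq_superset G (G.isClique_singleton x)
  exact ⟨A, hA, hxA rfl⟩

/-- `r`, `jn`, `mt` stand for `⊑`, `∨`, `∧`; the last two fields are conditions (i) and (ii). -/
structure CliqueOrder (G : SimpleGraph V) (r : Set V → Set V → Prop)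
    (jn mt : Set V → Set V → Set V) : Prop where
  trans {A B C} : MaxCliq G A → MaxCliq G B → MaxCliq G C → r A B → r B C → r A C
  maxCliq_jn {A B} : MaxCliq G A → MaxCliq G B → MaxCliq G (jn A B)
  le_jn {A B} : MaxCliq G A → MaxCliq G B → r A (jn A B)
  maxCliq_mt {A B} : MaxCliq G A → MaxCliq G B → MaxCliq G (mt A B)
  mt_le_left {A B} : MaxCliq G A → MaxCliq G B → r (mt A B) A
  mt_le_right {A B} : MaxCliq G A → MaxCliq G B → r (mt A B) B
  inter_subset {A B C} : MaxCliq G A → MaxCliq G B → MaxCliq G C → r A B → r B C → A ∩ C ⊆ B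
  subset_jn_union_mt {A B} : MaxCliq G A → MaxCliq G B → A ∪ B ⊆ jn A B ∪ mt A B

def CliqueBelow (G : SimpleGraph V) (r : Set V → Set V → Prop) (x y : V) : Prop :=
  ∃ C' C'' : Set V, MaxCliq G C' ∧ MaxCliq G C'' ∧ r C' C'' ∧ x ∈ C' ∧ y ∈ C''

def CliqueOrientation (G : SimpleGraph V) (r : Set V → Set V → Prop) (x y : V) : Prop :=
  ¬ G.Adj x y ∧ CliqueBelow G r x y

theorem cliqueOrientation_refl {G : SimpleGraph V} {r : Set V → Set V → Prop}
    (hrefl : ∀ A, MaxCliq G A → r A A) (x : V) : CliqueOrientation G r x x := by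
  obtain ⟨A, hA, hxA⟩ := exists_maxCliq_mem G x
  exact ⟨G.irrefl, A, A, hA, hA, hrefl A hA, hxA, hxA⟩

namespace CliqueOrder

variable {G : SimpleGraph V} {r : Set V → Set V → Prop} {jn mt : Set V → Set V → Set V}
  {A B : Set V} {x y z : V}

theorem mt_le_jn (L : CliqueOrder G r jn mt) (hA : MaxCliq G A) (hB : MaxCliq G B) :
    r (mt A B) (jn A B) :=
  L.trans (L.maxCliq_mt hA hB) hA (L.maxCliq_jn hA hB) (L.mt_le_left hA hB) (L.le_jn hA hB)

theorem cliqueBelow_of_mem_mt_of_mem_jn (L : CliqueOrder G r jn mt) (hA : MaxCliq G A)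
    (hB : MaxCliq G B) (hx : x ∈ mt A B) (hy : y ∈ jn A B) : CliqueBelow G r x y :=
  ⟨mt A B, jn A B, L.maxCliq_mt hA hB, L.maxCliq_jn hA hB, L.mt_le_jn hA hB, hx, hy⟩

theorem mem_mt_and_mem_jn_or (L : CliqueOrder G r jn mt) (hA : MaxCliq G A) (hB : MaxCliq G B)
    (hxA : x ∈ A) (hyB : y ∈ B) (hne : x ≠ y) (hna : ¬ G.Adj x y) :
    (x ∈ mt A B ∧ y ∈ jn A B) ∨ (y ∈ mt A B ∧ x ∈ jn A B) := by
  obtain hx | hx := L.subset_jn_union_mt hA hB (Or.inl hxA) <;>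
  obtain hy | hy := L.subset_jn_union_mt hA hB (Or.inr hyB)
  · exact absurd ((L.maxCliq_jn hA hB).1 hx hy hne) hna
  · exact Or.inr ⟨hy, hx⟩
  · exact Or.inl ⟨hx, hy⟩
  · exact absurd ((L.maxCliq_mt hA hB).1 hx hy hne) hna

theorem cliqueBelow_or_cliqueBelow (L : CliqueOrder G r jn mt) (hne : x ≠ y)
    (hna : ¬ G.Adj x y) : CliqueBelow G r x y ∨ CliqueBelow G r y x := by
  obtain ⟨A, hA, hxA⟩ := exists_maxCliq_mem G x
  obtain ⟨B, hB, hyB⟩ := exists_maxCliq_mem G y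
  exact (L.mem_mt_and_mem_jn_or hA hB hxA hyB hne hna).imp
    (fun ⟨hx, hy⟩ => L.cliqueBelow_of_mem_mt_of_mem_jn hA hB hx hy)
    (fun ⟨hy, hx⟩ => L.cliqueBelow_of_mem_mt_of_mem_jn hA hB hy hx)

theorem not_cliqueBelow_of_cliqueOrientation (L : CliqueOrder G r jn mt) (hne : x ≠ y)
    (hxy : CliqueOrientation G r x y) : ¬ CliqueBelow G r y x := by
  obtain ⟨hna, A, B, hA, hB, hAB, hxA, hyB⟩ := hxy
  rintro ⟨C, D, hC, hD, hCD, hyC, hxD⟩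
  have hM := L.maxCliq_mt hA hC
  obtain ⟨hx, -⟩ | ⟨hy, -⟩ := L.mem_mt_and_mem_jn_or hA hC hxA hyC hne hna
  · have hxC := L.inter_subset hM hC hD (L.mt_le_right hA hC) hCD ⟨hx, hxD⟩
    exact hne (hC.1.eq hxC hyC hna)
  · have hyA := L.inter_subset hM hA hB (L.mt_le_left hA hC) hAB ⟨hy, hyB⟩
    exact hne (hA.1.eq hxA hyA hna)

theorem mem_mt_and_mem_jn_of_cliqueOrientation (L : CliqueOrder G r jn mt) (hA : MaxCliq G A)
    (hB : MaxCliq G B) (hxA : x ∈ A) (hyB : y ∈ B) (hne : x ≠ y)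
    (hxy : CliqueOrientation G r x y) : x ∈ mt A B ∧ y ∈ jn A B :=
  (L.mem_mt_and_mem_jn_or hA hB hxA hyB hne hxy.1).resolve_right fun ⟨hy, hx⟩ =>
    L.not_cliqueBelow_of_cliqueOrientation hne hxy (L.cliqueBelow_of_mem_mt_of_mem_jn hA hB hy hx)

theorem not_adj_of_cliqueOrientation (L : CliqueOrder G r jn mt) (hne_xy : x ≠ y) (hne_yz : y ≠ z)
    (hxy : CliqueOrientation G r x y) (hyz : CliqueOrientation G r y z) : ¬ G.Adj x z := by
  intro hxz
  obtain ⟨M, hM, hxzM⟩ := exists_maxCliq_superset G (G.isClique_pair.2 fun _ => hxz)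
  obtain ⟨C, hC, hyC⟩ := exists_maxCliq_mem G y
  have hxM : x ∈ M := hxzM (Or.inl rfl)
  have hJ := L.maxCliq_jn hM hC
  have hyJ := (L.mem_mt_and_mem_jn_of_cliqueOrientation hM hC hxM hyC hne_xy hxy).2
  have hyT := (L.mem_mt_and_mem_jn_of_cliqueOrientation hJ hM hyJ (hxzM (Or.inr rfl))
    hne_yz hyz).1
  -- `mt (jn M C) M ⊑ M ⊑ jn M C`, so condition (i) puts `y` into `M` next to `x`
  have hyM := L.inter_subset (L.maxCliq_mt hJ hM) hM hJ (L.mt_le_right hJ hM) (L.le_jn hM hC)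
    ⟨hyT, hyJ⟩
  exact hne_xy (hM.1.eq hxM hyM hxy.1)

theorem cliqueBelow_trans (L : CliqueOrder G r jn mt) (hne_xy : x ≠ y) (hne_yz : y ≠ z)
    (hxy : CliqueOrientation G r x y) (hyz : CliqueOrientation G r y z) : CliqueBelow G r x z := by
  obtain ⟨A, C, hA, hC, -, hxA, hyC⟩ := hxy.2
  obtain ⟨-, D, -, hD, -, -, hzD⟩ := hyz.2
  have hJ := L.maxCliq_jn hA hC
  obtain ⟨hxM, hyJ⟩ := L.mem_mt_and_mem_jn_of_cliqueOrientation hA hC hxA hyC hne_xy hxy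
  have hzJ := (L.mem_mt_and_mem_jn_of_cliqueOrientation hJ hD hyJ hzD hne_yz hyz).2
  refine ⟨mt A C, jn (jn A C) D, L.maxCliq_mt hA hC, L.maxCliq_jn hJ hD, ?_, hxM, hzJ⟩
  exact L.trans (L.maxCliq_mt hA hC) hJ (L.maxCliq_jn hJ hD) (L.mt_le_jn hA hC) (L.le_jn hJ hD)

theorem cliqueOrientation_trans (L : CliqueOrder G r jn mt) (hxy : CliqueOrientation G r x y)
    (hyz : CliqueOrientation G r y z) : CliqueOrientation G r x z := by
  obtain rfl | hne_xy := eq_or_ne x y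
  · exact hyz
  obtain rfl | hne_yz := eq_or_ne y z
  · exact hxy
  exact ⟨L.not_adj_of_cliqueOrientation hne_xy hne_yz hxy hyz,
    L.cliqueBelow_trans hne_xy hne_yz hxy hyz⟩

theorem eq_of_cliqueOrientation (L : CliqueOrder G r jn mt) (hxy : CliqueOrientation G r x y)
    (hyx : CliqueOrientation G r y x) : x = y :=
  by_contra fun hne => L.not_cliqueBelow_of_cliqueOrientation hne hxy hyx.2

theorem cliqueOrientation_or_iff (L : CliqueOrder G r jn mt) (hne : x ≠ y) :
    CliqueOrientation G r x y ∨ CliqueOrientation G r y x ↔ ¬ G.Adj x y := by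
  refine ⟨?_, fun hna => (L.cliqueBelow_or_cliqueBelow hne hna).imp (⟨hna, ·⟩)
    (⟨fun h => hna h.symm, ·⟩)⟩
  rintro (h | h)
  exacts [h.1, fun hadj => h.1 hadj.symm]

end CliqueOrder

end

theorem stmt12_general {V : Type*} (G : SimpleGraph V)
    (r : Set V → Set V → Prop) (jn mt : Set V → Set V → Set V)
    (hrefl : ∀ A, MaxCliq G A → r A A)
    (htrans : ∀ A B C, MaxCliq G A → MaxCliq G B → MaxCliq G C → r A B → r B C → r A C)
    (hjn : ∀ A B, MaxCliq G A → MaxCliq G B →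
      MaxCliq G (jn A B) ∧ r A (jn A B) ∧ r B (jn A B) ∧
      (∀ C, MaxCliq G C → r A C → r B C → r (jn A B) C))
    (hmt : ∀ A B, MaxCliq G A → MaxCliq G B →
      MaxCliq G (mt A B) ∧ r (mt A B) A ∧ r (mt A B) B ∧
      (∀ C, MaxCliq G C → r C A → r C B → r C (mt A B)))
    (hi : ∀ A B C, MaxCliq G A → MaxCliq G B → MaxCliq G C → r A B → r B C → A ∩ C ⊆ B)
    (hii : ∀ A B, MaxCliq G A → MaxCliq G B → A ∪ B ⊆ jn A B ∪ mt A B)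
    (R : V → V → Prop)
    (hR : ∀ x y, R x y ↔ ¬ G.Adj x y ∧
      ∃ C' C'' : Set V, MaxCliq G C' ∧ MaxCliq G C'' ∧ r C' C'' ∧ x ∈ C' ∧ y ∈ C'') :
    (∀ x, R x x) ∧
    (∀ x y, R x y → R y x → x = y) ∧
    (∀ x y z, R x y → R y z → R x z) ∧
    (∀ x y, x ≠ y → ((R x y ∨ R y x) ↔ ¬ G.Adj x y)) := by
  have L : CliqueOrder G r jn mt :=
    { trans := htrans _ _ _
      maxCliq_jn := fun hA hB => (hjn _ _ hA hB).1
      le_jn := fun hA hB => (hjn _ _ hA hB).2.1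
      maxCliq_mt := fun hA hB => (hmt _ _ hA hB).1
      mt_le_left := fun hA hB => (hmt _ _ hA hB).2.1
      mt_le_right := fun hA hB => (hmt _ _ hA hB).2.2.1
      inter_subset := hi _ _ _
      subset_jn_union_mt := hii _ _ }
  obtain rfl : R = CliqueOrientation G r := funext fun x => funext fun y => propext (hR x y)
  exact ⟨cliqueOrientation_refl hrefl, fun _ _ => L.eq_of_cliqueOrientation,
    fun _ _ _ => L.cliqueOrientation_trans, fun _ _ => L.cliqueOrientation_or_iff⟩

/-- Given a lattice structure on the maximal cliques of `G` satisfying conditions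
(i) and (ii), the relation `R` (x R y iff x,y non-adjacent and some maximal clique
containing x is `⊑` some maximal clique containing y) is a partial order on the
vertices, and it is a transitive orientation of the complement of `G`. -/
theorem stmt12 {V : Type*} [Fintype V] (G : SimpleGraph V)
    (r : Set V → Set V → Prop) (jn mt : Set V → Set V → Set V)
    (hrefl : ∀ A, MaxCliq G A → r A A)
    (hantisymm : ∀ A B, MaxCliq G A → MaxCliq G B → r A B → r B A → A = B)
    (htrans : ∀ A B C, MaxCliq G A → MaxCliq G B → MaxCliq G C → r A B → r B C → r A C)
    (hjn : ∀ A B, MaxCliq G A → MaxCliq G B →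
      MaxCliq G (jn A B) ∧ r A (jn A B) ∧ r B (jn A B) ∧
      (∀ C, MaxCliq G C → r A C → r B C → r (jn A B) C))
    (hmt : ∀ A B, MaxCliq G A → MaxCliq G B →
      MaxCliq G (mt A B) ∧ r (mt A B) A ∧ r (mt A B) B ∧
      (∀ C, MaxCliq G C → r C A → r C B → r C (mt A B)))
    (hi : ∀ A B C, MaxCliq G A → MaxCliq G B → MaxCliq G C → r A B → r B C → A ∩ C ⊆ B)
    (hii : ∀ A B, MaxCliq G A → MaxCliq G B → A ∪ B ⊆ jn A B ∪ mt A B)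
    (R : V → V → Prop)
    (hR : ∀ x y, R x y ↔ ¬ G.Adj x y ∧
      ∃ C' C'' : Set V, MaxCliq G C' ∧ MaxCliq G C'' ∧ r C' C'' ∧ x ∈ C' ∧ y ∈ C'') :
    (∀ x, R x x) ∧
    (∀ x y, R x y → R y x → x = y) ∧
    (∀ x y z, R x y → R y z → R x z) ∧
    (∀ x y, x ≠ y → ((R x y ∨ R y x) ↔ ¬ G.Adj x y)) :=
  stmt12_general G r jn mt hrefl htrans hjn hmt hi hii R hR
end

section
/- A finite simple graph G is an interval graph if and only if there exists a total (linear) order ≤_T on the set of maximal cliques of G such that for all maximal cliques C_i, C_j, C_k with C_i ≤_T C_j ≤_T C_k, C_i ∩ C_k ⊆ C_j. -/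
/-- `G` is an interval graph: vertices can be assigned closed real intervals so
that distinct vertices are adjacent iff their intervals intersect. -/
def IsIntervalGraph {V : Type*} (G : SimpleGraph V) : Prop :=
  ∃ l r : V → ℝ, (∀ v, l v ≤ r v) ∧
    ∀ u v : V, u ≠ v → (G.Adj u v ↔ l u ≤ r v ∧ l v ≤ r u)

/-!
An interval representation orders the maximal cliques by a point that each of them stabs: a
maximal clique is exactly the set of intervals through the largest left endpoint of its members,
so if `A ≤ B ≤ C` and an interval meets the points of `A` and `C`, it meets the point of `B`.
Conversely, rank the maximal cliques by the order and give each vertex the interval spanned by the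
ranks of the maximal cliques containing it. If two such intervals meet, say `u`'s starts first,
then the first clique of `v` lies between the first and the last clique of `u`, so it
contains `u` as well as `v`.
-/

/-- A linear order on the sets satisfying `P` in which every point lies in an interval of them. -/
def IsConsecutiveOrder {α : Type*} (P : Set α → Prop) (t : Set α → Set α → Prop) : Prop :=
  (∀ A B, P A → P B → t A B ∨ t B A) ∧
    (∀ A B, P A → P B → t A B → t B A → A = B) ∧
    (∀ A B C, P A → P B → P C → t A B → t B C → t A C) ∧
    (∀ A B C, P A → P B → P C → t A B → t B C → A ∩ C ⊆ B)

section Rank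

variable {α : Type*} {P : α → Prop} {t : α → α → Prop} {a b : α}

noncomputable def orderRank (P : α → Prop) (t : α → α → Prop) (a : α) : ℕ :=
  {b | P b ∧ t b a}.ncard

theorem orderRank_le_orderRank_iff (hP : {a | P a}.Finite)
    (htot : ∀ a b, P a → P b → t a b ∨ t b a)
    (htrans : ∀ a b c, P a → P b → P c → t a b → t b c → t a c) (ha : P a) (hb : P b) :
    orderRank P t a ≤ orderRank P t b ↔ t a b := by
  have hfin : ∀ c, {d | P d ∧ t d c}.Finite := fun c => hP.subset fun d hd => hd.1
  refine ⟨fun hle => ?_, fun hab => ?_⟩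
  · by_contra hab
    have hba : t b a := (htot a b ha hb).resolve_left hab
    have hlt : {c | P c ∧ t c b} ⊂ {c | P c ∧ t c a} := by
      refine ⟨fun c hc => ⟨hc.1, htrans c b a hc.1 hb ha hc.2 hba⟩, fun hsub => hab ?_⟩
      exact (hsub ⟨ha, (htot a a ha ha).elim id id⟩).2
    exact (Set.ncard_lt_ncard hlt (hfin a)).not_ge hle
  · exact Set.ncard_le_ncard (fun c hc => ⟨hc.1, htrans c a b hc.1 ha hb hc.2 hab⟩) (hfin b)

end Rank

namespace MaxCliq

variable {V : Type*} {G : SimpleGraph V} {A : Set V}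

theorem nonempty [Nonempty V] (hA : MaxCliq G A) : A.Nonempty := by
  obtain ⟨v⟩ := ‹Nonempty V›
  by_contra hempty
  rw [Set.not_nonempty_iff_eq_empty] at hempty
  have := hA.2 {v} (G.isClique_singleton v) (hempty ▸ Set.empty_subset _)
  exact Set.singleton_ne_empty v (this ▸ hempty)

theorem exists_superset [Finite V] {s : Set V} (hs : G.IsClique s) :
    ∃ A, MaxCliq G A ∧ s ⊆ A := by
  obtain ⟨A, hsA, hA⟩ := Finite.exists_le_maximal hs
  exact ⟨A, ⟨hA.prop, fun B hB hAB => hAB.antisymm (hA.2 hB hAB)⟩, hsA⟩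

theorem exists_eq_setOf_mem_Icc [Finite V] {l r : V → ℝ} (hlr : ∀ v, l v ≤ r v)
    (hadj : ∀ u v, u ≠ v → (G.Adj u v ↔ l u ≤ r v ∧ l v ≤ r u)) (hA : MaxCliq G A) :
    ∃ x, A = {v | x ∈ Set.Icc (l v) (r v)} := by
  cases isEmpty_or_nonempty V
  · exact ⟨0, Subsingleton.elim _ _⟩
  obtain ⟨w, hwA, hw⟩ := Set.exists_max_image A l A.toFinite hA.nonempty
  have hle_r : ∀ v ∈ A, l w ≤ r v := fun v hv => by
    obtain rfl | hwv := eq_or_ne w v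
    · exact hlr w
    · exact ((hadj w v hwv).mp (hA.1 hwA hv hwv)).1
  refine ⟨l w, Set.eq_of_subset_of_subset (fun v hv => ⟨hw v hv, hle_r v hv⟩) ?_⟩
  rintro v ⟨hlv, hrv⟩
  have hclique : G.IsClique (insert v A) := by
    refine SimpleGraph.isClique_insert.mpr ⟨hA.1, fun b hb hvb => ?_⟩
    exact (hadj v b hvb).mpr ⟨hlv.trans (hle_r b hb), (hw b hb).trans hrv⟩
  rw [hA.2 _ hclique (Set.subset_insert v A)]
  exact Set.mem_insert v A

end MaxCliq

theorem isConsecutiveOrder_of_eq_setOf_mem_Icc {α : Type*} {P : Set α → Prop} {l r : α → ℝ}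
    (x : Set α → ℝ) (hx : ∀ A, P A → A = {v | x A ∈ Set.Icc (l v) (r v)}) :
    IsConsecutiveOrder P (fun A B => x A ≤ x B) := by
  refine ⟨fun A B _ _ => le_total _ _, fun A B hA hB hAB hBA => ?_,
    fun A B C _ _ _ => le_trans, fun A B C hA hB hC hAB hBC v hv => ?_⟩
  · rw [hx A hA, hx B hB, hAB.antisymm hBA]
  · have hvA : x A ∈ Set.Icc (l v) (r v) := (hx A hA).subset hv.1
    have hvC : x C ∈ Set.Icc (l v) (r v) := (hx C hC).subset hv.2
    exact (hx B hB).symm.subset ⟨hvA.1.trans hAB, hBC.trans hvC.2⟩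

theorem isIntervalGraph_of_consecutive {V : Type*} [Finite V] {G : SimpleGraph V}
    (f : Set V → ℝ)
    (hf : ∀ A B C, MaxCliq G A → MaxCliq G B → MaxCliq G C → f A ≤ f B → f B ≤ f C →
      A ∩ C ⊆ B) :
    IsIntervalGraph G := by
  have hS : ∀ v, {A | MaxCliq G A ∧ v ∈ A}.Nonempty := fun v => by
    obtain ⟨A, hA, hvA⟩ := MaxCliq.exists_superset (G.isClique_singleton v)
    exact ⟨A, hA, hvA rfl⟩
  choose first hfirst hfirst_le using fun v => Set.exists_min_image _ f (Set.toFinite _) (hS v)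
  choose last hlast hle_last using fun v => Set.exists_max_image _ f (Set.toFinite _) (hS v)
  have hadj_of_le : ∀ u v, u ≠ v → f (first u) ≤ f (first v) →
      f (first v) ≤ f (last u) → G.Adj u v := fun u v huv h₁ h₂ => by
    have hu : u ∈ first v :=
      hf _ _ _ (hfirst u).1 (hfirst v).1 (hlast u).1 h₁ h₂ ⟨(hfirst u).2, (hlast u).2⟩
    exact (hfirst v).1.1 hu (hfirst v).2 huv
  refine ⟨fun v => f (first v), fun v => f (last v), fun v => hfirst_le v _ (hlast v),
    fun u v huv => ⟨fun hadj => ?_, fun ⟨hlu, hlv⟩ => ?_⟩⟩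
  · obtain ⟨D, hD, huvD⟩ :=
      MaxCliq.exists_superset (SimpleGraph.isClique_pair.mpr fun _ => hadj)
    have hu : D ∈ {A | MaxCliq G A ∧ u ∈ A} := ⟨hD, huvD (Set.mem_insert u _)⟩
    have hv : D ∈ {A | MaxCliq G A ∧ v ∈ A} := ⟨hD, huvD (Set.mem_insert_of_mem u rfl)⟩
    exact ⟨(hfirst_le u D hu).trans (hle_last v D hv),
      (hfirst_le v D hv).trans (hle_last u D hu)⟩
  · rcases le_total (f (first u)) (f (first v)) with h | h
    · exact hadj_of_le u v huv h hlv
    · exact (hadj_of_le v u huv.symm h hlu).symm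

/-- A finite graph is an interval graph iff its maximal cliques can be linearly
ordered so that consecutiveness holds: whenever `Cᵢ ≤ Cⱼ ≤ Cₖ`, `Cᵢ ∩ Cₖ ⊆ Cⱼ`. -/
theorem stmt14 {V : Type*} [Fintype V] (G : SimpleGraph V) :
    IsIntervalGraph G ↔
    ∃ t : Set V → Set V → Prop,
      (∀ A B, MaxCliq G A → MaxCliq G B → t A B ∨ t B A) ∧
      (∀ A B, MaxCliq G A → MaxCliq G B → t A B → t B A → A = B) ∧
      (∀ A B C, MaxCliq G A → MaxCliq G B → MaxCliq G C → t A B → t B C → t A C) ∧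
      (∀ A B C, MaxCliq G A → MaxCliq G B → MaxCliq G C → t A B → t B C → A ∩ C ⊆ B) := by
  constructor
  · rintro ⟨l, r, hlr, hadj⟩
    choose! x hx using fun A (hA : MaxCliq G A) => hA.exists_eq_setOf_mem_Icc hlr hadj
    exact ⟨_, isConsecutiveOrder_of_eq_setOf_mem_Icc x hx⟩
  · rintro ⟨t, htot, -, htrans, hcons⟩
    have hrank : ∀ A B, MaxCliq G A → MaxCliq G B →
        ((orderRank (MaxCliq G) t A : ℝ) ≤ orderRank (MaxCliq G) t B ↔ t A B) :=
      fun A B hA hB => by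
        exact_mod_cast orderRank_le_orderRank_iff (Set.toFinite _) htot htrans hA hB
    exact isIntervalGraph_of_consecutive (fun A => orderRank (MaxCliq G) t A)
      fun A B C hA hB hC hAB hBC =>
        hcons A B C hA hB hC ((hrank A B hA hB).mp hAB) ((hrank B C hB hC).mp hBC)
end

section
/- Let P be a finite partial order and let v be an element of P such that the set C_v = {v} ∪ {u : u ∥_P v} is an antichain of P (i.e., v is a simplicial vertex of the incomparability graph of P). Then C_v is a maximal antichain of P, and C_v is fully comparable in (MA(P), ⊑): for every maximal antichain D of P, either D ⊑ C_v or C_v ⊑ D. -/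
/-- Every element is comparable to some element of a maximal antichain. -/
lemma maxAntichain_comp {α : Type*} [PartialOrder α] {D : Set α}
    (hD : MaxAntichain D) (x : α) : ∃ d ∈ D, x ≤ d ∨ d ≤ x := by
  by_cases hx : x ∈ D
  · exact ⟨x, hx, Or.inl le_rfl⟩
  by_contra h
  push_neg at h
  have hins : IsAntichain (· ≤ ·) (insert x D) := by
    intro a ha b hb hab hle
    rcases ha with rfl | ha
    · rcases hb with rfl | hb
      · exact hab rfl
      · exact (h b hb).1 hle
    · rcases hb with rfl | hb
      · exact (h a ha).2 hle
      · exact hD.1 ha hb hab hle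
  have := hD.2 (insert x D) hins (Set.subset_insert x D)
  exact hx (this ▸ Set.mem_insert x D)

/-- If `v` is simplicial in the incomparability graph of `P`, i.e. the set
`C_v = {v} ∪ {u : u ∥ v}` is an antichain, then `C_v` is a maximal antichain
which is comparable under `⊑` with every maximal antichain of `P`. -/
theorem stmt18 {α : Type*} [Fintype α] [PartialOrder α] (v : α)
    (hsimp : IsAntichain (· ≤ ·) (insert v {u : α | ¬ v ≤ u ∧ ¬ u ≤ v})) :
    MaxAntichain (insert v {u : α | ¬ v ≤ u ∧ ¬ u ≤ v}) ∧
    ∀ D : Set α, MaxAntichain D →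
      MARel D (insert v {u : α | ¬ v ≤ u ∧ ¬ u ≤ v}) ∨
      MARel (insert v {u : α | ¬ v ≤ u ∧ ¬ u ≤ v}) D := by
  set C : Set α := insert v {u : α | ¬ v ≤ u ∧ ¬ u ≤ v} with hC
  have hvC : v ∈ C := Set.mem_insert _ _
  have hmax : MaxAntichain C := by
    refine ⟨hsimp, fun B hB hCB => Set.Subset.antisymm hCB fun b hb => ?_⟩
    by_cases hbv : b = v
    · exact hbv ▸ hvC
    · refine Set.mem_insert_iff.mpr (Or.inr ⟨fun hle => ?_, fun hle => ?_⟩)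
      · exact hB (hCB hvC) hb (fun h => hbv h.symm) hle
      · exact hB hb (hCB hvC) hbv hle
  refine ⟨hmax, fun D hD => ?_⟩
  by_cases hcase : ∃ d ∈ D, v ≤ d
  · -- C ⊑ D
    obtain ⟨d, hdD, hvd⟩ := hcase
    refine Or.inr fun c hc => ?_
    rcases Set.mem_insert_iff.mp hc with rfl | hc'
    · exact ⟨d, hdD, hvd⟩
    · obtain ⟨hcv1, hcv2⟩ := hc'
      obtain ⟨d', hd'D, hd'⟩ := maxAntichain_comp hD c
      rcases hd' with hcd' | hd'c
      · exact ⟨d', hd'D, hcd'⟩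
      · -- d' ≤ c; show d' ∈ C, then d' = c by antichain C
        have hd'C : d' ∈ C := by
          by_cases h1 : v ≤ d'
          · exact absurd (h1.trans hd'c) hcv1
          by_cases h2 : d' ≤ v
          · exfalso
            have : d' = d := by
              by_contra hne
              exact hD.1 hd'D hdD hne (h2.trans hvd)
            subst this
            exact hcv1 (hvd.trans hd'c)
          · exact Set.mem_insert_iff.mpr (Or.inr ⟨h1, h2⟩)
        have hcC : c ∈ C := hc
        have : d' = c := by
          by_contra hne
          exact hsimp hd'C hcC hne hd'c
        exact ⟨d', hd'D, this ▸ le_rfl⟩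
  · -- D ⊑ C
    push_neg at hcase
    refine Or.inl fun d hdD => ?_
    by_cases h1 : d ≤ v
    · exact ⟨v, hvC, h1⟩
    · exact ⟨d, Set.mem_insert_iff.mpr (Or.inr ⟨hcase d hdD, h1⟩), le_rfl⟩
end
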